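/- arXiv:1011.2887 — 3 statements merged into one kernel-verified Lean document; each statement's English description precedes it below -/
import Mathlib

section
/- For any family of points b_{i_1,...,i_s} in F^m indexed by tuples (i_1,...,i_s) of natural numbers with i_1 + ... + i_s ≤ r, there exists a polynomial mapping f: F^s → F^m of degree at most r such that f(i_1,...,i_s) = b_{i_1,...,i_s} for all such tuples. -/
open MvPolynomial Finset

noncomputable def Qpoly (F : Type*) [Field F] (s : ℕ) (i : Fin s → ℕ) :
    MvPolynomial (Fin s) F :=
  C ((∏ j, Nat.factorial (i j) : ℕ) : F)⁻¹ *
    ∏ j, ∏ t ∈ Finset.range (i j), (X j - C (t : F))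

theorem Qpoly_deg (F : Type*) [Field F] (s : ℕ) (i : Fin s → ℕ) :
    (Qpoly F s i).totalDegree ≤ ∑ j, i j := by
  unfold Qpoly
  refine le_trans (totalDegree_mul _ _) ?_
  rw [totalDegree_C, zero_add]
  refine le_trans (totalDegree_finset_prod _ _) (Finset.sum_le_sum fun j _ => ?_)
  refine le_trans (totalDegree_finset_prod _ _) ?_
  have : ∀ t : ℕ, (X j - C (t : F) : MvPolynomial (Fin s) F).totalDegree ≤ 1 := by
    intro t
    rw [sub_eq_add_neg]
    refine le_trans (totalDegree_add _ _) (max_le ?_ ?_)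
    · exact (totalDegree_X j).le
    · rw [totalDegree_neg, totalDegree_C]; exact Nat.zero_le 1
  calc ∑ t ∈ Finset.range (i j), (X j - C (t : F) : MvPolynomial (Fin s) F).totalDegree
      ≤ ∑ _t ∈ Finset.range (i j), 1 := Finset.sum_le_sum fun t _ => this t
    _ = i j := by simp

theorem Qpoly_eval (F : Type*) [Field F] (s : ℕ) (i k : Fin s → ℕ) :
    eval (fun j => (k j : F)) (Qpoly F s i) =
      ((∏ j, Nat.factorial (i j) : ℕ) : F)⁻¹ * ∏ j, ∏ t ∈ Finset.range (i j), ((k j : F) - t) := by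
  simp [Qpoly]

theorem Qpoly_eval_diag (F : Type*) [Field F] [CharZero F] (s : ℕ) (i : Fin s → ℕ) :
    eval (fun j => (i j : F)) (Qpoly F s i) = 1 := by
  rw [Qpoly_eval]
  have h : ∀ j : Fin s, ∏ t ∈ Finset.range (i j), ((i j : F) - t) = (Nat.factorial (i j) : F) := by
    intro j
    have : ∀ t ∈ Finset.range (i j), ((i j : F) - t) = ((i j - t : ℕ) : F) := by
      intro t ht
      rw [Finset.mem_range] at ht
      rw [Nat.cast_sub ht.le]
    rw [Finset.prod_congr rfl this, ← Nat.cast_prod, ← Nat.descFactorial_eq_prod_range,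
      Nat.descFactorial_self]
  rw [Finset.prod_congr rfl (fun j _ => h j), ← Nat.cast_prod]
  rw [inv_mul_cancel₀]
  exact Nat.cast_ne_zero.mpr (Finset.prod_ne_zero_iff.mpr fun j _ => Nat.factorial_ne_zero _)

theorem Qpoly_eval_zero (F : Type*) [Field F] (s : ℕ) (i k : Fin s → ℕ) (h : ¬ i ≤ k) :
    eval (fun j => (k j : F)) (Qpoly F s i) = 0 := by
  rw [Qpoly_eval]
  obtain ⟨j, hj⟩ : ∃ j, k j < i j := by
    by_contra hc
    push_neg at hc
    exact h fun j => hc j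
  have : ∏ t ∈ Finset.range (i j), ((k j : F) - t) = 0 := by
    apply Finset.prod_eq_zero (Finset.mem_range.mpr hj)
    simp
  rw [mul_eq_zero]
  right
  exact Finset.prod_eq_zero (Finset.mem_univ j) this

theorem sum_lt_of_le_of_ne {s : ℕ} {i k : Fin s → ℕ} (hle : i ≤ k) (hne : i ≠ k) :
    ∑ j, i j < ∑ j, k j := by
  obtain ⟨j, hj⟩ : ∃ j, i j ≠ k j := by
    by_contra hc; push_neg at hc; exact hne (funext hc)
  exact Finset.sum_lt_sum (fun j _ => hle j) ⟨j, Finset.mem_univ j, lt_of_le_of_ne (hle j) hj⟩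

noncomputable def interpCoeff (F : Type*) [Field F] (s : ℕ)
    (e : (Fin s → ℕ) → (Fin s → ℕ) → F) (b : (Fin s → ℕ) → F) :
    (Fin s → ℕ) → F
  | k => b k - ∑ i ∈ (Finset.Iic k \ {k}).attach, interpCoeff F s e b i.1 * e i.1 k
termination_by k => ∑ j, k j
decreasing_by
  have h := i.2
  rw [Finset.mem_sdiff, Finset.mem_Iic, Finset.mem_singleton] at h
  exact sum_lt_of_le_of_ne h.1 h.2

theorem interpCoeff_spec (F : Type*) [Field F] (s : ℕ)
    (e : (Fin s → ℕ) → (Fin s → ℕ) → F) (b : (Fin s → ℕ) → F)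
    (he : ∀ k, e k k = 1) (k : Fin s → ℕ) :
    ∑ i ∈ Finset.Iic k, interpCoeff F s e b i * e i k = b k := by
  rw [Finset.sum_eq_sum_sdiff_singleton_add (Finset.mem_Iic.mpr le_rfl)]
  rw [he k, mul_one]
  conv_lhs => rw [show interpCoeff F s e b k
    = b k - ∑ i ∈ (Finset.Iic k \ {k}).attach, interpCoeff F s e b i.1 * e i.1 k
    from by rw [interpCoeff]]
  rw [Finset.sum_attach (Finset.Iic k \ {k}) (fun i => interpCoeff F s e b i * e i k)]
  ring

/-- Multivariate interpolation on the lattice simplex: for any prescribed values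
`b i ∈ F^m` indexed by tuples `i = (i_1,…,i_s) ∈ ℕ^s` with `i_1 + ⋯ + i_s ≤ r`,
there is a polynomial mapping `f : F^s → F^m` of degree at most `r` with
`f(i) = b i` for all such tuples. -/
theorem stmt2 (F : Type*) [Field F] [CharZero F] (s m r : ℕ)
    (b : (Fin s → ℕ) → Fin m → F) :
    ∃ f : Fin m → MvPolynomial (Fin s) F,
      (∀ l, (f l).totalDegree ≤ r) ∧
      ∀ i : Fin s → ℕ, (∑ j, i j) ≤ r →
        ∀ l, MvPolynomial.eval (fun j => (i j : F)) (f l) = b i l := by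
  set e : (Fin s → ℕ) → (Fin s → ℕ) → F :=
    fun i k => eval (fun j => (k j : F)) (Qpoly F s i) with he_def
  set S : Finset (Fin s → ℕ) :=
    (Finset.Iic (fun _ => r)).filter (fun i => ∑ j, i j ≤ r) with hS_def
  refine ⟨fun l => ∑ i ∈ S, interpCoeff F s e (fun i' => b i' l) i • Qpoly F s i, ?_, ?_⟩
  · intro l
    refine le_trans (totalDegree_finset_sum _ _) (Finset.sup_le fun i hi => ?_)
    have hi' : ∑ j, i j ≤ r := (Finset.mem_filter.mp hi).2
    exact le_trans (le_trans (totalDegree_smul_le _ _) (Qpoly_deg F s i)) hi'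
  · intro k hk l
    rw [map_sum]
    have hsub : Finset.Iic k ⊆ S := by
      intro i hi
      rw [Finset.mem_Iic] at hi
      rw [hS_def, Finset.mem_filter, Finset.mem_Iic]
      have hsum : ∑ j, i j ≤ r := le_trans (Finset.sum_le_sum fun j _ => hi j) hk
      constructor
      · intro j
        exact le_trans (Finset.single_le_sum (fun j _ => Nat.zero_le _) (Finset.mem_univ j)) hsum
      · exact hsum
    have hvanish : ∀ i ∈ S, i ∉ Finset.Iic k →
        eval (fun j => (k j : F)) (interpCoeff F s e (fun i' => b i' l) i • Qpoly F s i) = 0 := by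
      intro i _ hik
      rw [Finset.mem_Iic] at hik
      rw [smul_eval, Qpoly_eval_zero F s i k hik, mul_zero]
    rw [← Finset.sum_subset hsub hvanish]
    have : ∀ i ∈ Finset.Iic k,
        eval (fun j => (k j : F)) (interpCoeff F s e (fun i' => b i' l) i • Qpoly F s i)
        = interpCoeff F s e (fun i' => b i' l) i * e i k := by
      intro i _
      rw [smul_eval]
    rw [Finset.sum_congr rfl this]
    exact interpCoeff_spec F s e (fun i' => b i' l) (fun k' => Qpoly_eval_diag F s k') k
end

section
/- Let D ∈ ℕ, and let p_1, ..., p_m be distinct primes with p_i ≥ D + 3 for all i. Set b^i = e^{2πi/p_i} and let b̃^i = Σ_{j=1}^i a^i_j b^j with a^i_j ∈ ℚ and a^i_i ≠ 0. Then for every nonzero polynomial g ∈ ℚ[Y_1,...,Y_m] of total degree at most D, g(b̃^1, ..., b̃^m) ≠ 0. -/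
/-!
Induct on `m`. Let `K = ℚ(ζ_N)` with `N = p_1 ⋯ p_{m-1}`; it contains `b̃^1, …, b̃^{m-1}`, and
`b̃^m = a^m_m b^m + c` with `c ∈ K`, so `K(b̃^m) = K(b^m)`. Since `N` and `p_m` are coprime,
`[ℚ(ζ_N, ζ_{p_m}) : ℚ] = φ(N p_m) = φ(N)(p_m - 1)`, hence `b̃^m` has degree `p_m - 1 > D` over `K`.
Expanding `g` in the last variable gives a polynomial over `K` of degree `≤ D` which, by the
induction hypothesis applied to one of its coefficients, is nonzero; so it cannot vanish at `b̃^m`.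
-/

open MvPolynomial IntermediateField Module Finset

def AlgebraicIndependentUpTo (R : Type*) {ι A : Type*} [CommRing R] [CommRing A] [Algebra R A]
    (D : ℕ) (x : ι → A) : Prop :=
  ∀ g : MvPolynomial ι R, g ≠ 0 → g.totalDegree ≤ D → aeval x g ≠ 0

theorem MvPolynomial.aeval_optionElim {R K E ι : Type*} [CommRing R] [CommRing K] [CommRing E]
    [Algebra R K] [Algebra K E] [Algebra R E] [IsScalarTower R K E]
    (y : ι → K) (t : E) (g : MvPolynomial (Option ι) R) :
    aeval (fun o : Option ι => o.elim t (algebraMap K E ∘ y)) g =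
      Polynomial.aeval t ((optionEquivLeft R ι g).map (aeval y).toRingHom) := by
  induction g using MvPolynomial.induction_on with
  | C r => simp [optionEquivLeft_C, IsScalarTower.algebraMap_apply R K E]
  | add p q hp hq => simp [hp, hq, Polynomial.map_add]
  | mul_X p o hp =>
    cases o <;> simp [hp, optionEquivLeft_X_none, optionEquivLeft_X_some, Polynomial.map_mul]

section AlgebraicIndependentUpTo

variable {R ι σ A : Type*} [CommRing R] [CommRing A] [Algebra R A] {D : ℕ} {x : ι → A}

theorem AlgebraicIndependent.algebraicIndependentUpTo (hx : AlgebraicIndependent R x) (D : ℕ) :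
    AlgebraicIndependentUpTo R D x :=
  fun _ hg _ h => hg (hx (by rw [h, map_zero]))

theorem AlgebraicIndependentUpTo.comp_equiv (hx : AlgebraicIndependentUpTo R D x) (e : σ ≃ ι) :
    AlgebraicIndependentUpTo R D (x ∘ e) := by
  intro g hg hdeg
  rw [← aeval_rename]
  exact hx _ ((rename_injective e e.injective).ne_iff' (map_zero _) |>.2 hg)
    ((totalDegree_rename_le _ _).trans hdeg)

theorem AlgebraicIndependentUpTo.optionElim {K E : Type*} [Field K] [CommRing E] [Algebra R K]
    [Algebra K E] [Algebra R E] [IsScalarTower R K E] {y : ι → K}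
    (hy : AlgebraicIndependentUpTo R D (algebraMap K E ∘ y)) {t : E}
    (ht : D < (minpoly K t).natDegree) :
    AlgebraicIndependentUpTo R D (fun o : Option ι => o.elim t (algebraMap K E ∘ y)) := by
  intro g hg hdeg hzero
  set P := (optionEquivLeft R ι g).map (aeval y).toRingHom
  have hP : Polynomial.aeval t P = 0 := by rwa [aeval_optionElim] at hzero
  have hP0 : P ≠ 0 := by
    obtain ⟨k, hk⟩ := nonempty_support_optionEquivLeft R hg
    have hc := hy _ (Polynomial.mem_support_iff.1 hk)
      ((totalDegree_coeff_optionEquivLeft_le R ι g k).trans hdeg)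
    rw [aeval_algebraMap_apply] at hc
    intro h
    apply hc
    simpa [P] using congrArg (fun Q => algebraMap K E (Q.coeff k)) h
  have hPdeg : P.natDegree ≤ D :=
    Polynomial.natDegree_map_le.trans <| by
      rw [natDegree_optionEquivLeft]; exact (degreeOf_le_totalDegree g none).trans hdeg
  have := Polynomial.natDegree_le_of_dvd (minpoly.dvd K t hP) hP0
  omega

end AlgebraicIndependentUpTo

theorem IsPrimitiveRoot.totient_le_natDegree_minpoly_adjoin {E : Type*} [Field E] [CharZero E]
    {n q : ℕ} (hn : 0 < n) (hq : 0 < q) (hnq : n.Coprime q) {ζ η x : E}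
    (hζ : IsPrimitiveRoot ζ n) (hη : IsPrimitiveRoot η q) (hx : IsIntegral ℚ⟮ζ⟯ x)
    (hηx : η ∈ ℚ⟮ζ⟯⟮x⟯) : q.totient ≤ (minpoly ℚ⟮ζ⟯ x).natDegree := by
  set K := ℚ⟮ζ⟯
  set L := K⟮x⟯
  have hζint : IsIntegral ℚ ζ := (hζ.isIntegral hn).tower_top
  have hK : finrank ℚ K = n.totient := by
    rw [adjoin.finrank hζint, ← Polynomial.cyclotomic_eq_minpoly_rat hζ hn,
      Polynomial.natDegree_cyclotomic]
  have : FiniteDimensional ℚ K := adjoin.finiteDimensional hζint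
  have : FiniteDimensional K L := adjoin.finiteDimensional hx
  have : FiniteDimensional ℚ L := FiniteDimensional.trans ℚ K L
  have : Module.Free K L := Module.Free.of_divisionRing K L
  have hζL : ζ ∈ L := L.algebraMap_mem ⟨ζ, mem_adjoin_simple_self ℚ ζ⟩
  -- `L` contains primitive `n`-th and `q`-th roots of unity, so `φ(n) φ(q) ≤ [L : ℚ] = φ(n) [L : K]`.
  have hlcm := IsPrimitiveRoot.lcm_totient_le_finrank (K := ℚ) (L := L)
    (x := ⟨ζ, hζL⟩) (y := ⟨η, hηx⟩) (IsPrimitiveRoot.coe_submonoidClass_iff.1 hζ)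
    (IsPrimitiveRoot.coe_submonoidClass_iff.1 hη)
    (Polynomial.cyclotomic.irreducible_rat (by positivity))
  rw [hnq.lcm_eq_mul, Nat.totient_mul hnq, ← Module.finrank_mul_finrank ℚ K L, hK,
    adjoin.finrank hx] at hlcm
  exact Nat.le_of_mul_le_mul_left hlcm (Nat.totient_pos.2 hn)

noncomputable def zeta (n : ℕ) : ℂ := Complex.exp (2 * Real.pi * Complex.I / n)

theorem zeta_isPrimitiveRoot {n : ℕ} (hn : n ≠ 0) : IsPrimitiveRoot (zeta n) n :=
  Complex.isPrimitiveRoot_exp n hn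

theorem zeta_mul_pow {d e : ℕ} (he : e ≠ 0) : zeta (d * e) ^ e = zeta d := by
  rw [zeta, zeta, ← Complex.exp_nat_mul]
  rcases eq_or_ne d 0 with rfl | hd
  · simp
  congr 1
  push_cast
  field_simp

theorem zeta_mem_adjoin_zeta {d N : ℕ} (hN : N ≠ 0) (hd : d ∣ N) : zeta d ∈ ℚ⟮zeta N⟯ := by
  obtain ⟨e, rfl⟩ := hd
  rw [← zeta_mul_pow (d := d) (right_ne_zero_of_mul hN)]
  exact pow_mem (mem_adjoin_simple_self ℚ _) e

theorem isIntegral_zeta (K : Type*) [Field K] [Algebra K ℂ] {n : ℕ} (hn : n ≠ 0) :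
    IsIntegral K (zeta n) :=
  ((zeta_isPrimitiveRoot hn).isIntegral (Nat.pos_of_ne_zero hn)).tower_top

theorem sum_ratCast_mul_zeta_mem_adjoin {ι : Type*} (s : Finset ι) (a : ι → ℚ) (p : ι → ℕ)
    {N : ℕ} (hN : N ≠ 0) (hp : ∀ j ∈ s, p j ∣ N) :
    ∑ j ∈ s, (a j : ℂ) * zeta (p j) ∈ ℚ⟮zeta N⟯ :=
  sum_mem fun j hj => mul_mem (SubfieldClass.ratCast_mem _ _) (zeta_mem_adjoin_zeta hN (hp j hj))

theorem totient_le_natDegree_minpoly_ratCast_mul_zeta_add {N q : ℕ} (hN : N ≠ 0) (hq : q ≠ 0)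
    (hNq : N.Coprime q) {r : ℚ} (hr : r ≠ 0) {c : ℂ} (hc : c ∈ ℚ⟮zeta N⟯) :
    q.totient ≤ (minpoly ℚ⟮zeta N⟯ ((r : ℂ) * zeta q + c)).natDegree := by
  set K := ℚ⟮zeta N⟯
  set t := (r : ℂ) * zeta q + c
  have htint : IsIntegral K t :=
    .add (.mul (by simpa using isIntegral_algebraMap (R := K) (A := ℂ) (x := (r : K)))
      (isIntegral_zeta K hq)) (isIntegral_algebraMap (x := (⟨c, hc⟩ : K)))
  have hqt : zeta q ∈ K⟮t⟯ := by
    have hr' : (r : ℂ) ≠ 0 := by exact_mod_cast hr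
    rw [show zeta q = (r : ℂ)⁻¹ * (t - c) by field_simp; ring]
    exact mul_mem (inv_mem (SubfieldClass.ratCast_mem _ _))
      (sub_mem (mem_adjoin_simple_self K t) (IntermediateField.algebraMap_mem _ (⟨c, hc⟩ : K)))
  exact (zeta_isPrimitiveRoot hN).totient_le_natDegree_minpoly_adjoin (Nat.pos_of_ne_zero hN)
    (Nat.pos_of_ne_zero hq) hNq (zeta_isPrimitiveRoot hq) htint hqt

theorem algebraicIndependentUpTo_triangular_zeta (D : ℕ) {m : ℕ} (p : Fin m → ℕ)
    (hp : ∀ i, (p i).Prime) (hinj : Function.Injective p) (hD : ∀ i, D + 2 ≤ p i)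
    (a : Fin m → Fin m → ℚ) (ha : ∀ i, a i i ≠ 0) :
    AlgebraicIndependentUpTo ℚ D fun i => ∑ j ∈ Iic i, (a i j : ℂ) * zeta (p j) := by
  induction m with
  | zero => exact algebraicIndependent_empty_type.algebraicIndependentUpTo D
  | succ m ih =>
    set N := ∏ i : Fin m, p i.castSucc
    set q := p (Fin.last m)
    set K := ℚ⟮zeta N⟯
    have hN : N ≠ 0 := prod_ne_zero_iff.2 fun i _ => (hp _).ne_zero
    have hq : q.Prime := hp _
    have hNq : N.Coprime q := Nat.Coprime.prod_left fun i _ =>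
      (Nat.coprime_primes (hp _) hq).2 (hinj.ne (Fin.castSucc_ne_last i))
    have hinit (i : Fin m) : ∑ j ∈ Iic i.castSucc, (a i.castSucc j : ℂ) * zeta (p j) =
        ∑ j ∈ Iic i, (a i.castSucc j.castSucc : ℂ) * zeta (p j.castSucc) :=
      Fin.sum_Iic_castSucc _ i
    have hmem (i : Fin m) : ∑ j ∈ Iic i.castSucc, (a i.castSucc j : ℂ) * zeta (p j) ∈ K :=
      hinit i ▸ sum_ratCast_mul_zeta_mem_adjoin _ _ _ hN fun j _ => dvd_prod_of_mem _ (mem_univ j)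
    set y : Fin m → K := fun i => ⟨_, hmem i⟩
    have hy : AlgebraicIndependentUpTo ℚ D (algebraMap K ℂ ∘ y) := by
      convert ih (fun i => p i.castSucc) (fun i => hp _) (hinj.comp (Fin.castSucc_injective m))
        (fun i => hD _) (fun i j => a i.castSucc j.castSucc) (fun i => ha _) using 1
      exact funext hinit
    set t := ∑ j ∈ Iic (Fin.last m), (a (Fin.last m) j : ℂ) * zeta (p j) with ht
    have hdeg : D < (minpoly K t).natDegree := by
      rw [ht, show Iic (Fin.last m) = univ from Iic_top, Fin.sum_univ_castSucc, add_comm]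
      calc D < q.totient := by rw [Nat.totient_prime hq]; have := hD (Fin.last m); omega
        _ ≤ _ := totient_le_natDegree_minpoly_ratCast_mul_zeta_add hN hq.ne_zero hNq (ha _)
          (sum_ratCast_mul_zeta_mem_adjoin _ _ _ hN fun j _ => dvd_prod_of_mem _ (mem_univ j))
    convert (hy.optionElim hdeg).comp_equiv finSuccEquivLast using 1
    funext i
    cases i using Fin.lastCases <;> simp [y, t]

open Complex in
/-- Let `p_1, …, p_m` be distinct primes with `p_i ≥ D + 3`, `b^i = e^{2πi/p_i}`, and
`b̃^i = ∑_{j ≤ i} a^i_j b^j` with rational coefficients and `a^i_i ≠ 0`.  Then no nonzero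
rational polynomial of total degree at most `D` vanishes at `(b̃^1, …, b̃^m)`. -/
theorem stmt10 (D m : ℕ) (p : Fin m → ℕ) (hp : ∀ i, (p i).Prime)
    (hdist : Function.Injective p) (hge : ∀ i, D + 3 ≤ p i)
    (a : Fin m → Fin m → ℚ) (ha : ∀ i, a i i ≠ 0)
    (tb : Fin m → ℂ)
    (htb : ∀ i, tb i = ∑ j ∈ Finset.Iic i,
      (a i j : ℂ) * Complex.exp (2 * Real.pi * Complex.I / (p j : ℂ)))
    (g : MvPolynomial (Fin m) ℚ) (hg : g ≠ 0) (hdeg : g.totalDegree ≤ D) :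
    MvPolynomial.aeval tb g ≠ 0 := by
  obtain rfl : tb = fun i => ∑ j ∈ Iic i, (a i j : ℂ) * zeta (p j) := funext htb
  exact algebraicIndependentUpTo_triangular_zeta D p hp hdist
    (fun i => (Nat.le_succ _).trans (hge i)) a ha g hg hdeg
end

section
/- Let r ≥ 1 and n' ≥ r^2 be integers, and set n = 5n'r, p = 5r, m = (n')^2, s = ⌊(n')^2/2⌋. Then C(n+p, p) ≥ (m·C(s+r, r) + 1)/(m - s). In particular, the condition for existence of an (s,r)-elusive mapping in Pol^p(F^n, F^m) with C(n+p,p) prescribed image points is satisfied. -/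
/-!
The denominator `m - s = ⌈n'²/2⌉` is at least `m / 2`, so it suffices that `C(n+p, p) ≥ 2·C(s+r, r) + 1`.
Now `C(s+r, r) ≤ (s+1)^r`, so `2·C(s+r, r) + 1 ≤ (2s+3)^r ≤ ((n'+1)^5)^r`, while `C(k·b, b) ≥ k^b`
(one element from each of `b` blocks of size `k`) gives `C(n+p, p) = C((n'+1)·5r, 5r) ≥ (n'+1)^(5r)`.
-/

theorem Nat.pow_le_choose_mul (k b : ℕ) : k ^ b ≤ (k * b).choose b := by
  induction b with
  | zero => simp
  | succ b ih =>
    obtain rfl | ⟨j, rfl⟩ : k = 0 ∨ ∃ j, k = j + 1 := by cases k <;> simp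
    · simp
    have h := Nat.add_one_mul_choose_eq ((j + 1) * b + j) b
    have hsplit : ((j + 1) * (b + 1)).choose (b + 1) = (j + 1) * ((j + 1) * b + j).choose b :=
      Nat.eq_of_mul_eq_mul_right (Nat.add_one_pos b) <| by
        rw [show (j + 1) * (b + 1) = (j + 1) * b + j + 1 by ring, ← h]; ring
    rw [hsplit, pow_succ']
    exact Nat.mul_le_mul_left _ (ih.trans (Nat.choose_le_add _ _ _))

theorem Nat.two_mul_pow_add_one_le {r : ℕ} (hr : r ≠ 0) (a : ℕ) : 2 * a ^ r + 1 ≤ (2 * a + 1) ^ r :=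
  calc 2 * a ^ r + 1 ≤ (2 * a) ^ r + 1 ^ r := by
        rw [mul_pow, one_pow]; gcongr; exact Nat.le_self_pow hr 2
    _ ≤ (2 * a + 1) ^ r := pow_add_pow_le (Nat.zero_le _) (Nat.zero_le _) hr

theorem Nat.two_mul_choose_add_one_le_choose {s r k d : ℕ} (hr : r ≠ 0) (hs : 2 * s + 3 ≤ k ^ d) :
    2 * (s + r).choose r + 1 ≤ (k * (d * r)).choose (d * r) :=
  calc 2 * (s + r).choose r + 1 ≤ 2 * (s + 1) ^ r + 1 := by
        gcongr; exact Nat.choose_add_le_add_one_pow s r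
    _ ≤ (2 * (s + 1) + 1) ^ r := Nat.two_mul_pow_add_one_le hr _
    _ ≤ (k ^ d) ^ r := by gcongr; omega
    _ = k ^ (d * r) := (pow_mul k d r).symm
    _ ≤ (k * (d * r)).choose (d * r) := Nat.pow_le_choose_mul k (d * r)

theorem div_sub_le_of_two_mul_add_one_le {m s c b : ℕ} (hm : 0 < m) (hsm : 2 * s ≤ m)
    (hcb : 2 * c + 1 ≤ b) : ((m * c + 1 : ℚ)) / ((m : ℚ) - s) ≤ b := by
  have hden : ((m : ℚ) - s) = ((m - s : ℕ) : ℚ) := by push_cast [show s ≤ m by omega]; ring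
  rw [hden, div_le_iff₀ (by exact_mod_cast (show 0 < m - s by omega))]
  have hnat : m * c + 1 ≤ b * (m - s) := by
    calc m * c + 1 ≤ (m - s) * (2 * c + 1) := by nlinarith [Nat.sub_add_cancel (show s ≤ m by omega)]
      _ ≤ b * (m - s) := by rw [mul_comm]; gcongr
  exact_mod_cast hnat

/-- The arithmetic inequality of Proposition `c45`: for integers `r ≥ 1` and `n' ≥ r²`,
with `n = 5n'r`, `p = 5r`, `m = (n')²`, `s = ⌊(n')²/2⌋`, one has
`C(n+p, p) ≥ (m·C(s+r, r) + 1)/(m - s)`. -/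
theorem stmt18 (r n' : ℕ) (hr : 1 ≤ r) (hn : r ^ 2 ≤ n')
    (n p m s : ℕ) (hn2 : n = 5 * n' * r) (hp : p = 5 * r)
    (hm : m = n' ^ 2) (hs : s = n' ^ 2 / 2) :
    ((m * (s + r).choose r + 1 : ℚ)) / ((m : ℚ) - (s : ℚ)) ≤ ((n + p).choose p : ℚ) := by
  subst hn2 hp hm hs
  have hn' : 0 < n' := lt_of_lt_of_le (by positivity) hn
  have hsq : 2 * (n' ^ 2 / 2) ≤ n' ^ 2 := Nat.mul_div_le _ _
  have hpow : 2 * (n' ^ 2 / 2) + 3 ≤ (n' + 1) ^ 5 :=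
    calc 2 * (n' ^ 2 / 2) + 3 ≤ (n' + 1) ^ 2 := by nlinarith
      _ ≤ (n' + 1) ^ 5 := Nat.pow_le_pow_right n'.succ_pos (by norm_num)
  have hchoose := Nat.two_mul_choose_add_one_le_choose (r := r) (by omega) hpow
  rw [show (n' + 1) * (5 * r) = 5 * n' * r + 5 * r by ring] at hchoose
  exact div_sub_le_of_two_mul_add_one_le (by positivity) hsq hchoose
end
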